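/- An abelian group A belongs to C_p if and only if the p-primary torsion subgroup τ_p(A) is finite and (A/τ(A)) ⊗ Z_(p) is a finitely generated Z_(p)-module, where τ(A) is the full torsion subgroup of A. -/

import Mathlib

open scoped TensorProduct

noncomputable section

instance ZpSpanIsPrime (p : ℕ) [hp : Fact p.Prime] : (Ideal.span {(p : ℤ)}).IsPrime := by
  rw [Ideal.span_singleton_prime (by exact_mod_cast hp.out.ne_zero)]
  exact Nat.prime_iff_prime_int.mp hp.out

/-- `Z_(p)`, the localization of `ℤ` at the prime `p`. -/
abbrev Zp (p : ℕ) [Fact p.Prime] : Type :=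
  Localization.AtPrime (Ideal.span {(p : ℤ)})

/-- The class `C_p` of abelian groups `A` such that `A ⊗ Z_(p)` is a finitely
generated `Z_(p)`-module. -/
def MemCp (p : ℕ) [Fact p.Prime] (A : Type) [AddCommGroup A] : Prop :=
  Module.Finite (Zp p) (Zp p ⊗[ℤ] A)

/-! `Z_(p) ⊗ -` is localization at `p`; it is exact and kills every prime-to-`p` torsion group.
Hence `Z_(p) ⊗ τ(A)` and `Z_(p) ⊗ τ_p(A)` have the same image in `Z_(p) ⊗ A`, which gives the
exact sequence `Z_(p) ⊗ τ_p(A) → Z_(p) ⊗ A → Z_(p) ⊗ (A/τ(A)) → 0`; if `τ_p(A)` is finite its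
outer terms are finitely generated, and so is the middle one. Conversely `τ_p(A)` embeds into
`Z_(p) ⊗ τ_p(A)`, which embeds into `Z_(p) ⊗ A` and so is finitely generated over the noetherian
ring `Z_(p)`. On a `p`-primary group `Z_(p)` acts through `ℤ ⧸ p^k`, so `Z_(p) ⊗ τ_p(A)` is a
finitely generated torsion abelian group, hence finite. -/

namespace AddCommGroup

variable {G : Type*} [AddCommGroup G] {p : ℕ}

lemma primaryComponent.mem_primaryComponent (t : primaryComponent G p) :
    t ∈ primaryComponent (primaryComponent G p) p := by
  obtain ⟨k, hk⟩ := t.2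
  exact ⟨k, Subtype.ext hk⟩

lemma mem_primaryComponent_tensor {M B : Type*} [AddCommGroup M] [AddCommGroup B]
    (h : ∀ b : B, b ∈ primaryComponent B p) (x : M ⊗[ℤ] B) : x ∈ primaryComponent (M ⊗[ℤ] B) p := by
  induction x using TensorProduct.induction_on with
  | zero => exact zero_mem _
  | tmul z b =>
    obtain ⟨k, hk⟩ := h b
    exact ⟨k, by rw [← TensorProduct.tmul_smul, hk, TensorProduct.tmul_zero]⟩
  | add x y hx hy => exact add_mem hx hy

variable [hp : Fact p.Prime]

lemma primaryComponent_le_torsion : primaryComponent G p ≤ torsion G := fun _ ⟨k, hk⟩ =>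
  isOfFinAddOrder_iff_nsmul_eq_zero.mpr ⟨p ^ k, pow_pos hp.out.pos k, hk⟩

lemma eq_zero_of_zsmul_eq_zero_of_mem_primaryComponent {t : G} (ht : t ∈ primaryComponent G p)
    {m : ℤ} (hm : ¬ (p : ℤ) ∣ m) (hmt : m • t = 0) : t = 0 := by
  obtain ⟨k, hk⟩ := ht
  obtain ⟨u, v, huv⟩ : IsCoprime m ((p : ℤ) ^ k) :=
    (((Nat.prime_iff_prime_int.mp hp.out).coprime_iff_not_dvd).mpr hm).symm.pow_right
  calc t = (u * m + v * (p : ℤ) ^ k) • t := by rw [huv, one_smul]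
    _ = 0 := by rw [add_smul, mul_smul, mul_smul, hmt, ← Nat.cast_pow, natCast_zsmul, hk,
      smul_zero, smul_zero, add_zero]

-- `m` is the prime-to-`p` part of the order of `t`.
lemma exists_zsmul_mem_primaryComponent {t : G} (ht : t ∈ torsion G) :
    ∃ m : ℤ, ¬ (p : ℤ) ∣ m ∧ m • t ∈ primaryComponent G p := by
  set n := addOrderOf t
  refine ⟨(ordCompl[p] n : ℕ), ?_, n.factorization p, ?_⟩
  · exact_mod_cast Nat.not_dvd_ordCompl hp.out (IsOfFinAddOrder.addOrderOf_pos ht).ne'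
  · rw [natCast_zsmul, smul_smul, Nat.ordProj_mul_ordCompl_eq_self, addOrderOf_nsmul_eq_zero]

end AddCommGroup

open AddCommGroup

namespace IsLocalization.AtPrime

variable (p : ℕ) [hp : Fact p.Prime] {R : Type*} [CommRing R]
  [IsLocalization.AtPrime R (Ideal.span {(p : ℤ)})]

lemma not_dvd_of_mem_primeCompl {m : ℤ} (hm : m ∈ (Ideal.span {(p : ℤ)}).primeCompl) :
    ¬ (p : ℤ) ∣ m :=
  fun h => hm (Ideal.mem_span_singleton.mpr h)

variable {p}

lemma isUnit_intCast {m : ℤ} (hm : ¬ (p : ℤ) ∣ m) : IsUnit (m : R) := by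
  simpa using IsLocalization.map_units R
    (⟨m, fun h => hm (Ideal.mem_span_singleton.mp h)⟩ : (Ideal.span {(p : ℤ)}).primeCompl)

variable (p) in
lemma exists_eq_intCast_add_mul_pow (z : R) (k : ℕ) :
    ∃ (n : ℤ) (w : R), z = n + w * (p : R) ^ k := by
  obtain ⟨⟨a, s⟩, rfl⟩ := IsLocalization.mk'_surjective (Ideal.span {(p : ℤ)}).primeCompl z
  obtain ⟨u, v, huv⟩ : IsCoprime (s : ℤ) ((p : ℤ) ^ k) :=
    (((Nat.prime_iff_prime_int.mp hp.out).coprime_iff_not_dvd).mpr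
      (not_dvd_of_mem_primeCompl p s.2)).symm.pow_right
  have hs : ((s : ℤ) : R) * IsLocalization.mk' R a s = a := by
    simpa using IsLocalization.mk'_spec' R a s
  have huv' : (u : R) * s + v * (p : R) ^ k = 1 := by
    exact_mod_cast congrArg (Int.cast (R := R)) huv
  refine ⟨u * a, v * IsLocalization.mk' R a s, ?_⟩
  push_cast
  linear_combination (-IsLocalization.mk' R a s) * huv' + (u : R) * hs

section Module

variable {M : Type*} [AddCommGroup M] [Module R M]

lemma exists_smul_eq_zsmul {y : M} (hy : y ∈ primaryComponent M p) (z : R) :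
    ∃ n : ℤ, z • y = n • y := by
  obtain ⟨k, hk⟩ := hy
  obtain ⟨n, w, rfl⟩ := exists_eq_intCast_add_mul_pow p z k
  refine ⟨n, ?_⟩
  rw [add_smul, mul_smul, ← Nat.cast_pow, Nat.cast_smul_eq_nsmul, hk, smul_zero, add_zero,
    Int.cast_smul_eq_zsmul]

/-- On a `p`-primary module `R` acts through `ℤ`, so finite generation over `R`
is finite generation as an abelian group. -/
lemma finite_of_forall_mem_primaryComponent [Module.Finite R M]
    (h : ∀ y : M, y ∈ primaryComponent M p) : Finite M := by
  obtain ⟨s, hs⟩ := Module.Finite.fg_top (R := R) (M := M)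
  have hspan : ∀ y : M, y ∈ Submodule.span ℤ (s : Set M) := by
    intro y
    have hy : y ∈ Submodule.span R (s : Set M) := hs ▸ Submodule.mem_top
    induction hy using Submodule.span_induction with
    | mem y hy => exact Submodule.subset_span hy
    | zero => exact zero_mem _
    | add _ _ _ _ h₁ h₂ => exact add_mem h₁ h₂
    | smul z y _ hy =>
      obtain ⟨n, hn⟩ := exists_smul_eq_zsmul (h y) z
      exact hn ▸ Submodule.smul_mem _ n hy
  have : AddGroup.FG M := Module.Finite.iff_addGroup_fg.mp
    ⟨⟨s, eq_top_iff.mpr fun y _ => hspan y⟩⟩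
  exact finite_of_fg_isAddTorsion M fun y => primaryComponent_le_torsion (h y)

end Module

section TensorProduct

variable {B : Type*} [AddCommGroup B]

lemma mk_one_injective (h : ∀ b : B, b ∈ primaryComponent B p) :
    Function.Injective (TensorProduct.mk ℤ R B 1) := by
  refine (injective_iff_map_eq_zero _).mpr fun b hb => ?_
  obtain ⟨s, hs⟩ := (IsLocalizedModule.eq_zero_iff (Ideal.span {(p : ℤ)}).primeCompl _).mp hb
  exact eq_zero_of_zsmul_eq_zero_of_mem_primaryComponent (h b) (not_dvd_of_mem_primeCompl p s.2) hs

lemma exists_tmul_eq_tmul_zsmul {m : ℤ} (hm : ¬ (p : ℤ) ∣ m) (z : R) (b : B) :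
    ∃ z' : R, z ⊗ₜ[ℤ] b = z' ⊗ₜ[ℤ] (m • b) := by
  obtain ⟨w, hw⟩ := (isUnit_intCast (R := R) hm).exists_left_inv
  refine ⟨z * w, ?_⟩
  rw [TensorProduct.tmul_smul, TensorProduct.smul_tmul', zsmul_eq_mul]
  congr 1
  linear_combination (-z) * hw

end TensorProduct

variable (R) (A : Type*) [AddCommGroup A]

theorem finite_primaryComponent_of_finite_tensor [Module.Finite R (R ⊗[ℤ] A)] :
    Finite (primaryComponent A p) := by
  have : Module.Flat ℤ R := IsLocalization.flat R (Ideal.span {(p : ℤ)}).primeCompl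
  have : IsNoetherianRing R :=
    IsLocalization.isNoetherianRing (Ideal.span {(p : ℤ)}).primeCompl R inferInstance
  let ι := (primaryComponent A p).subtype.toIntLinearMap
  have : Module.Finite R (R ⊗[ℤ] primaryComponent A p) :=
    .of_injective (ι.baseChange R)
      (Module.Flat.lTensor_preserves_injective_linearMap ι Subtype.val_injective)
  have : Finite (R ⊗[ℤ] primaryComponent A p) :=
    finite_of_forall_mem_primaryComponent (R := R)
      (mem_primaryComponent_tensor primaryComponent.mem_primaryComponent)
  exact .of_injective _ (mk_one_injective (R := R) primaryComponent.mem_primaryComponent)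

-- Localizing at `p` kills the prime-to-`p` part of `τ(A)`.
theorem exact_baseChange_primaryComponent_subtype_torsion_mk :
    Function.Exact ((primaryComponent A p).subtype.toIntLinearMap.baseChange R)
      ((QuotientAddGroup.mk' (torsion A)).toIntLinearMap.baseChange R) := by
  set q := (QuotientAddGroup.mk' (torsion A)).toIntLinearMap
  have hq : Function.Surjective q := QuotientAddGroup.mk'_surjective _
  have hqι : q ∘ₗ (primaryComponent A p).subtype.toIntLinearMap = 0 := by
    ext t
    exact (QuotientAddGroup.eq_zero_iff _).mpr (primaryComponent_le_torsion t.2)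
  rw [LinearMap.exact_iff]
  apply le_antisymm
  · have hker : Function.Exact ((LinearMap.ker q).subtype.baseChange R) (q.baseChange R) :=
      lTensor_exact R q.exact_subtype_ker_map hq
    rw [hker.linearMap_ker_eq]
    rintro _ ⟨x, rfl⟩
    induction x using TensorProduct.induction_on with
    | zero => exact zero_mem _
    | tmul z t =>
      have ht : (t : A) ∈ torsion A := (QuotientAddGroup.eq_zero_iff _).mp t.2
      obtain ⟨m, hm, hmt⟩ := exists_zsmul_mem_primaryComponent (p := p) ht
      obtain ⟨z', hz'⟩ := exists_tmul_eq_tmul_zsmul hm z (t : A)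
      exact ⟨z' ⊗ₜ ⟨m • (t : A), hmt⟩, hz'.symm⟩
    | add x y hx hy => rw [map_add]; exact add_mem hx hy
  · rw [LinearMap.range_le_ker_iff, ← LinearMap.baseChange_comp, hqι, LinearMap.baseChange_zero]

theorem finite_tensor_iff :
    Module.Finite R (R ⊗[ℤ] A) ↔
      Finite (primaryComponent A p) ∧ Module.Finite R (R ⊗[ℤ] (A ⧸ torsion A)) := by
  have hq := LinearMap.baseChange_surjective R
    (g := (QuotientAddGroup.mk' (torsion A)).toIntLinearMap) (QuotientAddGroup.mk'_surjective _)
  refine ⟨fun _ => ⟨finite_primaryComponent_of_finite_tensor R A, .of_surjective _ hq⟩,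
    fun ⟨_, _⟩ => .of_exact (exact_baseChange_primaryComponent_subtype_torsion_mk (p := p) R A) hq⟩

end IsLocalization.AtPrime

/-- `A ∈ C_p` iff `τ_p(A)` is finite and `(A/τ(A)) ⊗ Z_(p)` is a finitely
generated `Z_(p)`-module. -/
theorem memCp_iff (p : ℕ) [Fact p.Prime] (A : Type) [AddCommGroup A] :
    MemCp p A ↔
      (Finite ↥(AddCommGroup.primaryComponent A p) ∧
        Module.Finite (Zp p) (Zp p ⊗[ℤ] (A ⧸ AddCommGroup.torsion A))) := by
  -- The `ℤ`-algebra structure of `Zp p` comes from `Localization` and is not defeq to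
  -- `Ring.toIntAlgebra`, the one compatible with the `ℤ`-module structure of `Zp p ⊗[ℤ] A`;
  -- all `ℤ`-algebra structures agree.
  have : @IsLocalization.AtPrime ℤ _ (Zp p) _ (Ring.toIntAlgebra _) (Ideal.span {(p : ℤ)}) _ := by
    convert (inferInstance : IsLocalization.AtPrime (Zp p) (Ideal.span {(p : ℤ)}))
    exact Subsingleton.elim _ _
  exact IsLocalization.AtPrime.finite_tensor_iff (Zp p) A
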